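/- Let ‖·‖ be a URTC-norm on ℝ² with unit sphere S. Suppose a, b, c, d ∈ S satisfy ‖a − d‖ = ‖b − c‖ = 1 and the six points a − d, a, b, c, d, d − a lie on S in this counterclockwise (positively oriented) cyclic order. Then a = b and c = d. -/

import Mathlib

/-- `N` is a norm on `ℝ²`. -/
structure IsNorm (N : ℝ × ℝ → ℝ) : Prop where
  add_le : ∀ x y : ℝ × ℝ, N (x + y) ≤ N x + N y
  smul_eq : ∀ (c : ℝ) (x : ℝ × ℝ), N (c • x) = |c| * N x
  eq_zero_of : ∀ x : ℝ × ℝ, N x = 0 → x = 0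

/-- `N` is a URTC-norm: for every `a b` at `N`-distance `1`, there are exactly two
points `x` with `N (a - x) = 1` and `N (b - x) = 1`. -/
def IsURTC (N : ℝ × ℝ → ℝ) : Prop :=
  ∀ a b : ℝ × ℝ, N (a - b) = 1 →
    {x : ℝ × ℝ | N (a - x) = 1 ∧ N (b - x) = 1}.encard = 2

/-- `p` lies on the open ray from the origin at angle `t`. -/
def OnRay (p : ℝ × ℝ) (t : ℝ) : Prop :=
  ∃ r : ℝ, 0 < r ∧ p = (r * Real.cos t, r * Real.sin t)

/-!
Along an arc of the unit sphere spanning an angle less than `π`, the distance `N (u - x)` from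
an endpoint `u` grows as `x` moves away from `u`: if `x = α • u + β • w` with `α, β ≥ 0`, two
triangle inequalities give `N (u - x) ≤ N (u - w)`. In the given configuration the arc from `a`
to `d` spans less than `π`, so `N (b - d) = 1 = N (a - c)`, and monotonicity squeezes
`N (d - x) = 1` for every `x` on the arc from `a` to `b`, and `N (a - x) = 1` for every `x` on
the arc from `c` to `d`. The URTC property for the pairs `(d, 0)` and `(a, 0)` allows only two
such unit vectors `x`, so both arcs are points.
-/

open Real Set

variable {N : ℝ × ℝ → ℝ}

namespace IsNorm

theorem map_zero (hN : IsNorm N) : N 0 = 0 := by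
  simpa using hN.smul_eq 0 0

theorem map_neg (hN : IsNorm N) (x : ℝ × ℝ) : N (-x) = N x := by
  simpa using hN.smul_eq (-1) x

theorem map_sub_comm (hN : IsNorm N) (x y : ℝ × ℝ) : N (x - y) = N (y - x) := by
  rw [← neg_sub, hN.map_neg]

theorem nonneg (hN : IsNorm N) (x : ℝ × ℝ) : 0 ≤ N x := by
  have h := hN.add_le x (-x)
  rw [add_neg_cancel, hN.map_neg, hN.map_zero] at h
  linarith

theorem pos (hN : IsNorm N) {x : ℝ × ℝ} (hx : x ≠ 0) : 0 < N x :=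
  (hN.nonneg x).lt_of_ne fun h => hx (hN.eq_zero_of x h.symm)

theorem smul_of_nonneg (hN : IsNorm N) {r : ℝ} (hr : 0 ≤ r) (x : ℝ × ℝ) :
    N (r • x) = r * N x := by
  rw [hN.smul_eq, abs_of_nonneg hr]

theorem sub_le_sub_of_eq_smul_add_smul (hN : IsNorm N) {u v w : ℝ × ℝ}
    (hu : N u = 1) (hv : N v = 1) (hw : N w = 1) {α β : ℝ} (hα : 0 ≤ α) (hβ : 0 ≤ β)
    (hvuw : v = α • u + β • w) :
    N (u - v) ≤ N (u - w) := by
  have hsum : 1 ≤ α + β := by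
    have h := hN.add_le (α • u) (β • w)
    rw [← hvuw, hv, hN.smul_of_nonneg hα, hN.smul_of_nonneg hβ, hu, hw] at h
    linarith
  have hpos : 0 < α + β := by linarith
  have h₁ : (α + β) * N (u - v) ≤ β * N (u - w) + (α + β - 1) := by
    have h := hN.add_le (β • (u - w)) ((1 - (α + β)) • v)
    rw [show β • (u - w) + (1 - (α + β)) • v = (α + β) • (u - v) by rw [hvuw]; module,
      hN.smul_of_nonneg hpos.le, hN.smul_of_nonneg hβ, hN.smul_eq, hv,
      abs_of_nonpos (by linarith)] at h
    linarith
  have h₂ : α + β - 1 ≤ α * N (u - w) := by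
    have h := hN.add_le (α • (w - u)) v
    rw [show α • (w - u) + v = (α + β) • w by rw [hvuw]; module, hN.smul_of_nonneg hpos.le,
      hN.smul_of_nonneg hα, hw, hv, hN.map_sub_comm w u] at h
    linarith
  exact le_of_mul_le_mul_left (by linarith) hpos

end IsNorm

noncomputable def dir (t : ℝ) : ℝ × ℝ := (cos t, sin t)

theorem onRay_iff_eq_smul_dir {p : ℝ × ℝ} {t : ℝ} : OnRay p t ↔ ∃ r : ℝ, 0 < r ∧ p = r • dir t :=
  Iff.rfl

theorem dir_ne_zero (t : ℝ) : dir t ≠ 0 := by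
  intro h
  have := sin_sq_add_cos_sq t
  simp only [dir, Prod.mk_eq_zero] at h
  rw [h.1, h.2] at this
  norm_num at this

theorem sin_sub_smul_dir (s t t' : ℝ) :
    sin (t' - s) • dir t = sin (t' - t) • dir s + sin (t - s) • dir t' := by
  simp only [dir, Prod.smul_mk, Prod.mk_add_mk, smul_eq_mul, Prod.mk.injEq, sin_sub]
  constructor <;> ring

namespace OnRay

theorem exists_eq_smul_add_smul {u v w : ℝ × ℝ} {s t t' : ℝ} (hu : OnRay u s)
    (hv : OnRay v t) (hw : OnRay w t') (hst : s ≤ t) (htt' : t ≤ t') (hspan : t' - s < π) :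
    ∃ α β : ℝ, 0 ≤ α ∧ 0 ≤ β ∧ v = α • u + β • w := by
  obtain ⟨p, hp, rfl⟩ := onRay_iff_eq_smul_dir.1 hu
  obtain ⟨q, hq, rfl⟩ := onRay_iff_eq_smul_dir.1 hv
  obtain ⟨m, hm, rfl⟩ := onRay_iff_eq_smul_dir.1 hw
  rcases (hst.trans htt').eq_or_lt with hs | hs
  · obtain rfl : t = s := by linarith
    refine ⟨q / p, 0, by positivity, le_rfl, ?_⟩
    rw [zero_smul, add_zero, smul_smul, div_mul_cancel₀ _ hp.ne']
  · have hS : 0 < sin (t' - s) := sin_pos_of_pos_of_lt_pi (by linarith) hspan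
    have hA : 0 ≤ sin (t' - t) := sin_nonneg_of_nonneg_of_le_pi (by linarith) (by linarith)
    have hB : 0 ≤ sin (t - s) := sin_nonneg_of_nonneg_of_le_pi (by linarith) (by linarith)
    refine ⟨q * sin (t' - t) / (p * sin (t' - s)), q * sin (t - s) / (m * sin (t' - s)),
      by positivity, by positivity, ?_⟩
    rw [show dir t = (sin (t' - s))⁻¹ • (sin (t' - s) • dir t) by
      rw [smul_smul, inv_mul_cancel₀ hS.ne', one_smul], sin_sub_smul_dir s t t']
    match_scalars <;> field_simp

theorem eq_of_apply_eq_one (hN : IsNorm N) {x y : ℝ × ℝ} {t : ℝ} (hx : OnRay x t)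
    (hy : OnRay y t) (nx : N x = 1) (ny : N y = 1) : x = y := by
  obtain ⟨r, hr, rfl⟩ := onRay_iff_eq_smul_dir.1 hx
  obtain ⟨r', hr', rfl⟩ := onRay_iff_eq_smul_dir.1 hy
  rw [hN.smul_of_nonneg hr.le] at nx
  rw [hN.smul_of_nonneg hr'.le] at ny
  rw [mul_right_cancel₀ (hN.pos (dir_ne_zero t)).ne' (nx.trans ny.symm)]

theorem angle_eq {x : ℝ × ℝ} {t t' : ℝ} (hx : OnRay x t) (hx' : OnRay x t')
    (h : |t - t'| < π) : t = t' := by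
  obtain ⟨r, hr, hxr⟩ := hx
  obtain ⟨r', hr', rfl⟩ := hx'
  obtain ⟨hcos, hsin⟩ := Prod.mk.inj hxr
  have hrr : r * r' * sin (t - t') = 0 := by
    rw [sin_sub]
    linear_combination (r' * sin t') * hcos - (r' * cos t') * hsin
  have hzero : sin (t - t') = 0 := by
    simpa [hr.ne', hr'.ne'] using hrr
  rw [abs_lt] at h
  linarith [(sin_eq_zero_iff_of_lt_of_lt h.1 h.2).1 hzero]

end OnRay

theorem IsNorm.sub_le_of_onRay (hN : IsNorm N) {u v w : ℝ × ℝ} {s t t' : ℝ}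
    (hu : OnRay u s) (hv : OnRay v t) (hw : OnRay w t') (hst : s ≤ t) (htt' : t ≤ t')
    (hspan : t' - s < π) (nu : N u = 1) (nv : N v = 1) (nw : N w = 1) :
    N (u - v) ≤ N (u - w) ∧ N (w - v) ≤ N (u - w) := by
  obtain ⟨α, β, hα, hβ, hvuw⟩ := hu.exists_eq_smul_add_smul hv hw hst htt' hspan
  refine ⟨hN.sub_le_sub_of_eq_smul_add_smul nu nv nw hα hβ hvuw, ?_⟩
  rw [hN.map_sub_comm u w]
  exact hN.sub_le_sub_of_eq_smul_add_smul nw nv nu hβ hα (hvuw.trans (add_comm _ _))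

noncomputable def unitRay (N : ℝ × ℝ → ℝ) (t : ℝ) : ℝ × ℝ := (N (dir t))⁻¹ • dir t

theorem onRay_unitRay (hN : IsNorm N) (t : ℝ) : OnRay (unitRay N t) t :=
  ⟨_, inv_pos.2 (hN.pos (dir_ne_zero t)), rfl⟩

theorem IsNorm.apply_unitRay (hN : IsNorm N) (t : ℝ) : N (unitRay N t) = 1 := by
  rw [unitRay, hN.smul_of_nonneg (inv_nonneg.2 (hN.nonneg _)),
    inv_mul_cancel₀ (hN.pos (dir_ne_zero t)).ne']

theorem infinite_image_unitRay (hN : IsNorm N) {l u : ℝ} (hlu : l < u) (hspan : u - l < π) :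
    (unitRay N '' Icc l u).Infinite := by
  refine (Icc_infinite hlu).image fun t ht t' ht' h => ?_
  refine (onRay_unitRay hN t).angle_eq (h ▸ onRay_unitRay hN t') ?_
  rw [abs_sub_lt_iff]
  constructor <;> linarith [ht.1, ht.2, ht'.1, ht'.2]

namespace IsURTC

theorem eq_of_forall_apply_sub_unitRay_eq_one (hN : IsNorm N) (hU : IsURTC N) {z : ℝ × ℝ}
    (hz : N z = 1) {l u : ℝ} (hlu : l ≤ u) (hspan : u - l < π)
    (h : ∀ t ∈ Icc l u, N (z - unitRay N t) = 1) : l = u := by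
  by_contra hne
  refine infinite_image_unitRay hN (hlu.lt_of_ne hne) hspan
    ((finite_of_encard_eq_coe (hU z 0 (by rwa [sub_zero]))).subset ?_)
  rintro _ ⟨t, ht, rfl⟩
  exact ⟨h t ht, by rw [zero_sub, hN.map_neg, hN.apply_unitRay]⟩

variable {u v w : ℝ × ℝ} {s t t' : ℝ}

theorem eq_of_apply_sub_eq_one_left (hN : IsNorm N) (hU : IsURTC N) (hu : OnRay u s)
    (hv : OnRay v t) (hw : OnRay w t') (hst : s ≤ t) (htt' : t ≤ t') (hspan : t' - s < π)
    (nu : N u = 1) (nv : N v = 1) (nw : N w = 1)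
    (hwu : N (w - u) = 1) (hwv : N (w - v) = 1) : u = v := by
  obtain rfl : s = t := hU.eq_of_forall_apply_sub_unitRay_eq_one hN nw hst (by linarith)
    fun x hx => by
      have hle := (hN.sub_le_of_onRay hu (onRay_unitRay hN x) hw hx.1 (hx.2.trans htt') hspan
        nu (hN.apply_unitRay x) nw).2
      have hge := (hN.sub_le_of_onRay (onRay_unitRay hN x) hv hw hx.2 htt'
        (by linarith [hx.1]) (hN.apply_unitRay x) nv nw).2
      rw [hN.map_sub_comm u w] at hle
      rw [hN.map_sub_comm (unitRay N x) w] at hge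
      linarith
  exact hu.eq_of_apply_eq_one hN hv nu nv

theorem eq_of_apply_sub_eq_one_right (hN : IsNorm N) (hU : IsURTC N) (hu : OnRay u s)
    (hv : OnRay v t) (hw : OnRay w t') (hst : s ≤ t) (htt' : t ≤ t') (hspan : t' - s < π)
    (nu : N u = 1) (nv : N v = 1) (nw : N w = 1)
    (huv : N (u - v) = 1) (huw : N (u - w) = 1) : v = w := by
  obtain rfl : t = t' := hU.eq_of_forall_apply_sub_unitRay_eq_one hN nu htt' (by linarith)
    fun x hx => by
      have hle := (hN.sub_le_of_onRay hu (onRay_unitRay hN x) hw (hst.trans hx.1) hx.2 hspan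
        nu (hN.apply_unitRay x) nw).1
      have hge := (hN.sub_le_of_onRay hu hv (onRay_unitRay hN x) hst hx.1
        (by linarith [hx.2]) nu nv (hN.apply_unitRay x)).1
      linarith
  exact hv.eq_of_apply_eq_one hN hw nv nw

end IsURTC

theorem eq_of_positively_oriented_general (N : ℝ × ℝ → ℝ) (hN : IsNorm N) (hU : IsURTC N)
    (a b c d : ℝ × ℝ)
    (ha : N a = 1) (hb : N b = 1) (hc : N c = 1) (hd : N d = 1)
    (had : N (a - d) = 1) (hbc : N (b - c) = 1)
    (t₀ t₁ t₂ t₃ t₄ t₅ : ℝ)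
    (h01 : t₀ ≤ t₁) (h12 : t₁ ≤ t₂) (h23 : t₂ ≤ t₃) (h34 : t₃ ≤ t₄) (h45 : t₄ ≤ t₅)
    (h5 : t₅ = t₀ + Real.pi)
    (r0 : OnRay (a - d) t₀) (r1 : OnRay a t₁) (r2 : OnRay b t₂) (r3 : OnRay c t₃)
    (r4 : OnRay d t₄) :
    a = b ∧ c = d := by
  -- a span of exactly `π` would put `a` and `a - d` on the same ray, forcing `d = 0`
  have hspan : t₄ - t₁ < π := by
    refine (show t₄ - t₁ ≤ π by linarith).lt_of_ne fun h => ?_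
    have had' : a - d = a := r0.eq_of_apply_eq_one hN (by rwa [show t₀ = t₁ by linarith]) had ha
    rw [sub_eq_self.1 had', hN.map_zero] at hd
    exact zero_ne_one hd
  have hdb : N (d - b) = 1 := by
    have hle := (hN.sub_le_of_onRay r1 r2 r4 h12 (h23.trans h34) hspan ha hb hd).2
    have hge := (hN.sub_le_of_onRay r2 r3 r4 h23 h34 (by linarith) hb hc hd).1
    rw [hN.map_sub_comm b d] at hge
    linarith
  have hac : N (a - c) = 1 := by
    have hle := (hN.sub_le_of_onRay r1 r3 r4 (h12.trans h23) h34 hspan ha hc hd).1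
    have hge := (hN.sub_le_of_onRay r1 r2 r3 h12 h23 (by linarith) ha hb hc).2
    rw [hN.map_sub_comm c b] at hge
    linarith
  exact ⟨hU.eq_of_apply_sub_eq_one_left hN r1 r2 r4 h12 (h23.trans h34) hspan ha hb hd
      (by rw [hN.map_sub_comm, had]) hdb,
    hU.eq_of_apply_sub_eq_one_right hN r1 r3 r4 (h12.trans h23) h34 hspan ha hc hd hac had⟩

/-- If `a, b, c, d` lie on the unit sphere of a URTC-norm with
`N (a - d) = N (b - c) = 1`, and the points `a - d, a, b, c, d, d - a` occur in this
counterclockwise order on a positively traversed (half-)arc, then `a = b` and `c = d`. -/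
theorem eq_of_positively_oriented (N : ℝ × ℝ → ℝ) (hN : IsNorm N) (hU : IsURTC N)
    (a b c d : ℝ × ℝ)
    (ha : N a = 1) (hb : N b = 1) (hc : N c = 1) (hd : N d = 1)
    (had : N (a - d) = 1) (hbc : N (b - c) = 1)
    (t₀ t₁ t₂ t₃ t₄ t₅ : ℝ)
    (h01 : t₀ ≤ t₁) (h12 : t₁ ≤ t₂) (h23 : t₂ ≤ t₃) (h34 : t₃ ≤ t₄) (h45 : t₄ ≤ t₅)
    (h5 : t₅ = t₀ + Real.pi)
    (r0 : OnRay (a - d) t₀) (r1 : OnRay a t₁) (r2 : OnRay b t₂) (r3 : OnRay c t₃)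
    (r4 : OnRay d t₄) (r5 : OnRay (d - a) t₅) :
    a = b ∧ c = d :=
  eq_of_positively_oriented_general N hN hU a b c d ha hb hc hd had hbc t₀ t₁ t₂ t₃ t₄ t₅ h01 h12
    h23 h34 h45 h5 r0 r1 r2 r3 r4
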